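/- arXiv:2212.09941 — 5 statements merged into one kernel-verified Lean document; each statement's English description precedes it below -/
import Mathlib

section
/- For any iterative play system (U, V) for a matrix A ∈ ℝ^{m×n}, liminf_{t→∞} t⁻¹ (max V(t) − min U(t)) ≥ 0. -/
open Matrix Finset Filter

/-- For any iterative play system `(U, V)` for a matrix `A`,
`liminf_{t→∞} t⁻¹ (max V(t) − min U(t)) ≥ 0`. -/
theorem liminf_iterative_play_nonneg (m n : ℕ) (A : Matrix (Fin (m+1)) (Fin (n+1)) ℝ)
    (U : ℕ → Fin (n+1) → ℝ) (V : ℕ → Fin (m+1) → ℝ)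
    (i : ℕ → Fin (m+1)) (j : ℕ → Fin (n+1))
    (h0 : Finset.univ.inf' Finset.univ_nonempty (U 0) =
          Finset.univ.sup' Finset.univ_nonempty (V 0))
    (hU : ∀ t, U (t+1) = U t + fun j' => A (i t) j')
    (hV : ∀ t, V (t+1) = V t + fun i' => A i' (j t)) :
    0 ≤ Filter.liminf (fun t : ℕ =>
      ((t : ℝ))⁻¹ * (Finset.univ.sup' Finset.univ_nonempty (V t) -
        Finset.univ.inf' Finset.univ_nonempty (U t))) Filter.atTop := by
  set f : ℕ → ℝ := fun t =>
      ((t : ℝ))⁻¹ * (Finset.univ.sup' Finset.univ_nonempty (V t) -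
        Finset.univ.inf' Finset.univ_nonempty (U t)) with hf
  set c : ℝ := Finset.univ.inf' Finset.univ_nonempty (V 0) -
      Finset.univ.sup' Finset.univ_nonempty (U 0) with hc
  have hUt : ∀ t j', U t j' = U 0 j' + ∑ s ∈ Finset.range t, A (i s) j' := by
    intro t
    induction t with
    | zero => simp
    | succ t ih =>
      intro j'
      rw [hU t]
      simp only [Pi.add_apply, ih j', Finset.sum_range_succ]
      ring
  have hVt : ∀ t i', V t i' = V 0 i' + ∑ s ∈ Finset.range t, A i' (j s) := by
    intro t
    induction t with
    | zero => simp
    | succ t ih =>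
      intro i'
      rw [hV t]
      simp only [Pi.add_apply, ih i', Finset.sum_range_succ]
      ring
  -- the key pointwise bound
  have key : ∀ t : ℕ, (t : ℝ) * c ≤
      (t : ℝ) * (Finset.univ.sup' Finset.univ_nonempty (V t) -
        Finset.univ.inf' Finset.univ_nonempty (U t)) := by
    intro t
    have e1 : ∑ s ∈ Finset.range t, V t (i s) =
        (∑ s ∈ Finset.range t, V 0 (i s)) +
          ∑ s ∈ Finset.range t, ∑ s' ∈ Finset.range t, A (i s) (j s') := by
      simp [hVt t, Finset.sum_add_distrib]
    have e2 : ∑ s ∈ Finset.range t, U t (j s) =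
        (∑ s ∈ Finset.range t, U 0 (j s)) +
          ∑ s ∈ Finset.range t, ∑ s' ∈ Finset.range t, A (i s') (j s) := by
      simp [hUt t, Finset.sum_add_distrib]
    have e3 : (∑ s ∈ Finset.range t, ∑ s' ∈ Finset.range t, A (i s) (j s'))
        = ∑ s ∈ Finset.range t, ∑ s' ∈ Finset.range t, A (i s') (j s) :=
      Finset.sum_comm
    have b1 : ∑ s ∈ Finset.range t, V t (i s) ≤
        (t : ℝ) * Finset.univ.sup' Finset.univ_nonempty (V t) := by
      calc ∑ s ∈ Finset.range t, V t (i s)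
          ≤ ∑ s ∈ Finset.range t, Finset.univ.sup' Finset.univ_nonempty (V t) :=
            Finset.sum_le_sum fun s _ => Finset.le_sup' (V t) (Finset.mem_univ _)
        _ = (t : ℝ) * Finset.univ.sup' Finset.univ_nonempty (V t) := by
            simp [mul_comm]
    have b2 : (t : ℝ) * Finset.univ.inf' Finset.univ_nonempty (U t) ≤
        ∑ s ∈ Finset.range t, U t (j s) := by
      calc (t : ℝ) * Finset.univ.inf' Finset.univ_nonempty (U t)
          = ∑ _s ∈ Finset.range t, Finset.univ.inf' Finset.univ_nonempty (U t) := by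
            simp [mul_comm]
        _ ≤ ∑ s ∈ Finset.range t, U t (j s) :=
            Finset.sum_le_sum fun s _ => Finset.inf'_le (U t) (Finset.mem_univ _)
    have b3 : (t : ℝ) * Finset.univ.inf' Finset.univ_nonempty (V 0) ≤
        ∑ s ∈ Finset.range t, V 0 (i s) := by
      calc (t : ℝ) * Finset.univ.inf' Finset.univ_nonempty (V 0)
          = ∑ _s ∈ Finset.range t, Finset.univ.inf' Finset.univ_nonempty (V 0) := by
            simp [mul_comm]
        _ ≤ ∑ s ∈ Finset.range t, V 0 (i s) :=
            Finset.sum_le_sum fun s _ => Finset.inf'_le (V 0) (Finset.mem_univ _)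
    have b4 : ∑ s ∈ Finset.range t, U 0 (j s) ≤
        (t : ℝ) * Finset.univ.sup' Finset.univ_nonempty (U 0) := by
      calc ∑ s ∈ Finset.range t, U 0 (j s)
          ≤ ∑ s ∈ Finset.range t, Finset.univ.sup' Finset.univ_nonempty (U 0) :=
            Finset.sum_le_sum fun s _ => Finset.le_sup' (U 0) (Finset.mem_univ _)
        _ = (t : ℝ) * Finset.univ.sup' Finset.univ_nonempty (U 0) := by
            simp [mul_comm]
    rw [hc]
    nlinarith [e1, e2, e3, b1, b2, b3, b4]
  -- hence f t ≥ t⁻¹ * c for t ≥ 1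
  have hge : ∀ t : ℕ, 1 ≤ t → (t : ℝ)⁻¹ * c ≤ f t := by
    intro t ht
    have htpos : (0 : ℝ) < (t : ℝ) := by exact_mod_cast Nat.lt_of_lt_of_le Nat.zero_lt_one ht
    have h1 : c ≤ Finset.univ.sup' Finset.univ_nonempty (V t) -
        Finset.univ.inf' Finset.univ_nonempty (U t) :=
      le_of_mul_le_mul_left (key t) htpos
    exact mul_le_mul_of_nonneg_left h1 (inv_nonneg.mpr htpos.le)
  have hg0 : Tendsto (fun t : ℕ => (t : ℝ)⁻¹ * c) atTop (nhds 0) := by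
    have h1 : Tendsto (fun t : ℕ => ((t : ℝ))⁻¹) atTop (nhds 0) :=
      tendsto_inv_atTop_zero.comp tendsto_natCast_atTop_atTop
    simpa using h1.mul_const c
  have hcob : IsCoboundedUnder (· ≥ ·) atTop (fun t : ℕ => (t : ℝ)⁻¹ * c) :=
    hg0.isCoboundedUnder_ge
  have hbdd : IsBoundedUnder (· ≥ ·) atTop f := by
    refine ⟨-|c|, ?_⟩
    rw [eventually_map]
    filter_upwards [eventually_ge_atTop 1] with t ht
    have htpos : (0 : ℝ) < (t : ℝ) := by exact_mod_cast Nat.lt_of_lt_of_le Nat.zero_lt_one ht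
    have hi0 : (0:ℝ) ≤ (t : ℝ)⁻¹ := inv_nonneg.mpr htpos.le
    have hi1 : (t : ℝ)⁻¹ ≤ 1 := by
      rw [inv_le_one_iff₀]
      right; exact_mod_cast ht
    have h2 : -|c| ≤ (t : ℝ)⁻¹ * c := by
      nlinarith [neg_abs_le c, abs_nonneg c,
        mul_nonneg hi0 (by linarith [neg_abs_le c] : (0:ℝ) ≤ c + |c|)]
    exact h2.trans (hge t ht)
  by_cases hcf : IsCoboundedUnder (· ≥ ·) atTop f
  · have hmono : liminf (fun t : ℕ => (t : ℝ)⁻¹ * c) atTop ≤ liminf f atTop := by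
      refine liminf_le_liminf ?_ hg0.isBoundedUnder_ge hcf
      filter_upwards [eventually_ge_atTop 1] with t ht
      exact hge t ht
    have h0' : liminf (fun t : ℕ => (t : ℝ)⁻¹ * c) atTop = 0 := hg0.liminf_eq
    linarith [hmono, h0'.symm.le]
  · have hnb : ¬ BddAbove {a : ℝ | ∀ᶠ t in atTop, a ≤ f t} := by
      intro h
      obtain ⟨b, hb⟩ := h
      exact hcf ⟨b, fun a ha => hb (by simpa [eventually_map] using ha)⟩
    rw [Filter.liminf_eq, Real.sSup_of_not_bddAbove hnb]
end

section
/- Let (U, V) be an iterative play system for A ∈ ℝ^{m×n} with a = max_{i,j} |A_{i,j}|. Suppose every column j ∈ {1,…,n} is E-eligible in the interval [s, s+t], i.e., for each j there exists t₁ ∈ [s, s+t] with u_j(t₁) ≤ min U(t₁) + 2a. Then max U(s+t) − min U(s+t) ≤ 2a(t+1). -/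
open Matrix Finset

/-- Robinson's Lemma 2 (column half), for perturbed eligibility: if `(U,V)` is an
iterative play system for `A`, `a = max_{i,j} |A_{i,j}|`, and every column `j` is
`E`-eligible in `[s, s+t]` (there is `t₁ ∈ [s, s+t]` with `u_j(t₁) ≤ min U(t₁) + 2a`),
then `max U(s+t) − min U(s+t) ≤ 2a(t+1)`. -/
theorem spread_bound_of_eligible_columns (m n : ℕ) (A : Matrix (Fin (m+1)) (Fin (n+1)) ℝ)
    (U : ℕ → Fin (n+1) → ℝ) (V : ℕ → Fin (m+1) → ℝ)
    (i : ℕ → Fin (m+1)) (j : ℕ → Fin (n+1))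
    (h0 : Finset.univ.inf' Finset.univ_nonempty (U 0) =
          Finset.univ.sup' Finset.univ_nonempty (V 0))
    (hU : ∀ t, U (t+1) = U t + fun j' => A (i t) j')
    (hV : ∀ t, V (t+1) = V t + fun i' => A i' (j t))
    (a : ℝ) (ha : a = ⨆ i' : Fin (m+1), ⨆ j' : Fin (n+1), |A i' j'|)
    (s t : ℕ)
    (helig : ∀ j' : Fin (n+1), ∃ t₁, s ≤ t₁ ∧ t₁ ≤ s + t ∧
      U t₁ j' ≤ Finset.univ.inf' Finset.univ_nonempty (U t₁) + 2 * a) :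
    Finset.univ.sup' Finset.univ_nonempty (U (s+t)) -
      Finset.univ.inf' Finset.univ_nonempty (U (s+t)) ≤ 2 * a * (t + 1) := by
  -- every entry of A is bounded by a
  have habs : ∀ i' j', |A i' j'| ≤ a := by
    intro i' j'
    rw [ha]
    have h1 : |A i' j'| ≤ ⨆ j'' : Fin (n+1), |A i' j''| :=
      le_ciSup (f := fun j'' => |A i' j''|) (Set.Finite.bddAbove (Set.finite_range _)) j'
    exact h1.trans (le_ciSup (f := fun i'' => ⨆ j'' : Fin (n+1), |A i'' j''|)
      (Set.Finite.bddAbove (Set.finite_range _)) i')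
  have ha0 : 0 ≤ a := le_trans (abs_nonneg _) (habs 0 0)
  -- entries change by at most a*d over d steps
  have hstep : ∀ k d (j' : Fin (n+1)), |U (k+d) j' - U k j'| ≤ a * d := by
    intro k d j'
    induction d with
    | zero => simp
    | succ d ih =>
      have h1 : U (k+d+1) j' = U (k+d) j' + A (i (k+d)) j' := by rw [hU]; rfl
      have : |U (k+(d+1)) j' - U k j'| ≤ |U (k+d) j' - U k j'| + |A (i (k+d)) j'| := by
        have : U (k+(d+1)) j' - U k j' = (U (k+d) j' - U k j') + A (i (k+d)) j' := by
          rw [show k+(d+1) = k+d+1 by ring, h1]; ring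
        rw [this]; exact abs_add_le _ _
      calc |U (k+(d+1)) j' - U k j'| ≤ |U (k+d) j' - U k j'| + |A (i (k+d)) j'| := this
        _ ≤ a * d + a := add_le_add ih (habs _ _)
        _ = a * (d+1 : ℕ) := by push_cast; ring
  obtain ⟨j₀, hj₀⟩ := Finset.exists_mem_eq_sup' Finset.univ_nonempty (U (s+t))
  obtain ⟨t₁, hst₁, ht₁, helig₁⟩ := helig j₀
  obtain ⟨d, hd⟩ := Nat.le.dest ht₁
  have hdt : (d : ℝ) ≤ t := by
    have : d ≤ t := by omega
    exact_mod_cast this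
  -- U (s+t) j₀ ≤ U t₁ j₀ + a*d
  have h1 : U (s+t) j₀ ≤ U t₁ j₀ + a * d := by
    have := hstep t₁ d j₀
    rw [hd] at this
    have := (abs_le.mp this).2
    linarith
  -- min U t₁ ≤ min U (s+t) + a*d
  obtain ⟨j₁, hj₁⟩ := Finset.exists_mem_eq_inf' Finset.univ_nonempty (U (s+t))
  have h2 : Finset.univ.inf' Finset.univ_nonempty (U t₁) ≤
      Finset.univ.inf' Finset.univ_nonempty (U (s+t)) + a * d := by
    have hmem : Finset.univ.inf' Finset.univ_nonempty (U t₁) ≤ U t₁ j₁ :=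
      Finset.inf'_le _ (Finset.mem_univ _)
    have := hstep t₁ d j₁
    rw [hd] at this
    have h3 := (abs_le.mp this).1
    rw [hj₁.2]
    linarith
  rw [hj₀.2] at *
  have hmin : Finset.univ.inf' Finset.univ_nonempty (U (s+t)) ≤ U (s+t) j₀ := by
    rw [← hj₀.2]; exact Finset.inf'_le _ (Finset.mem_univ _)
  nlinarith [mul_le_mul_of_nonneg_left hdt ha0]
end

section
/- Let (U, V) be an iterative play system for A ∈ ℝ^{m×n} with a = max_{i,j}|A_{i,j}|. If every row i is E-eligible in [s, s+t] (there exists t₁ ∈ [s,s+t] with v_i(t₁) ≥ max V(t₁) − 2a) and every column j is E-eligible in [s, s+t] (there exists t₁ ∈ [s,s+t] with u_j(t₁) ≤ min U(t₁) + 2a), then max V(s+t) − min U(s+t) ≤ 4a(t+1). -/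
open Matrix Finset

/-- Robinson's Lemma 3, for perturbed eligibility: if `(U,V)` is an iterative play system
for `A`, `a = max_{i,j}|A_{i,j}|`, and every row and every column is `E`-eligible in
`[s, s+t]`, then `max V(s+t) − min U(s+t) ≤ 4a(t+1)`. -/
theorem gap_bound_of_all_eligible (m n : ℕ) (A : Matrix (Fin (m+1)) (Fin (n+1)) ℝ)
    (U : ℕ → Fin (n+1) → ℝ) (V : ℕ → Fin (m+1) → ℝ)
    (i : ℕ → Fin (m+1)) (j : ℕ → Fin (n+1))
    (h0 : Finset.univ.inf' Finset.univ_nonempty (U 0) =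
          Finset.univ.sup' Finset.univ_nonempty (V 0))
    (hU : ∀ t, U (t+1) = U t + fun j' => A (i t) j')
    (hV : ∀ t, V (t+1) = V t + fun i' => A i' (j t))
    (a : ℝ) (ha : a = ⨆ i' : Fin (m+1), ⨆ j' : Fin (n+1), |A i' j'|)
    (s t : ℕ)
    (heligrow : ∀ i' : Fin (m+1), ∃ t₁, s ≤ t₁ ∧ t₁ ≤ s + t ∧
      Finset.univ.sup' Finset.univ_nonempty (V t₁) - 2 * a ≤ V t₁ i')
    (heligcol : ∀ j' : Fin (n+1), ∃ t₁, s ≤ t₁ ∧ t₁ ≤ s + t ∧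
      U t₁ j' ≤ Finset.univ.inf' Finset.univ_nonempty (U t₁) + 2 * a) :
    Finset.univ.sup' Finset.univ_nonempty (V (s+t)) -
      Finset.univ.inf' Finset.univ_nonempty (U (s+t)) ≤ 4 * a * (t + 1) := by
  have habs : ∀ i' j', |A i' j'| ≤ a := by
    intro i' j'
    rw [ha]
    calc |A i' j'| ≤ ⨆ j'', |A i' j''| :=
          le_ciSup (f := fun j'' => |A i' j''|)
            (Set.Finite.bddAbove (Set.finite_range _)) j'
      _ ≤ ⨆ i'', ⨆ j'', |A i'' j''| :=
          le_ciSup (f := fun i'' => ⨆ j'', |A i'' j''|)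
            (Set.Finite.bddAbove (Set.finite_range _)) i'
  have ha0 : 0 ≤ a := le_trans (abs_nonneg (A 0 0)) (habs 0 0)
  -- closed forms
  have hVsum : ∀ τ i', V τ i' = V 0 i' + ∑ k ∈ Finset.range τ, A i' (j k) := by
    intro τ
    induction τ with
    | zero => simp
    | succ τ ih =>
      intro i'
      rw [hV τ]
      simp only [Pi.add_apply, Finset.sum_range_succ, ih i']
      ring
  have hUsum : ∀ τ j', U τ j' = U 0 j' + ∑ k ∈ Finset.range τ, A (i k) j' := by
    intro τ
    induction τ with
    | zero => simp
    | succ τ ih =>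
      intro j'
      rw [hU τ]
      simp only [Pi.add_apply, Finset.sum_range_succ, ih j']
      ring
  -- Lipschitz bounds
  have hVdiff : ∀ t₁ t₂ i', t₁ ≤ t₂ → |V t₂ i' - V t₁ i'| ≤ a * ((t₂ : ℝ) - t₁) := by
    intro t₁ t₂ i' h
    have heq : V t₂ i' - V t₁ i' = ∑ k ∈ Finset.Ico t₁ t₂, A i' (j k) := by
      rw [hVsum t₂ i', hVsum t₁ i', ← Finset.sum_range_add_sum_Ico (fun k => A i' (j k)) h]
      ring
    rw [heq]
    calc |∑ k ∈ Finset.Ico t₁ t₂, A i' (j k)| ≤ ∑ k ∈ Finset.Ico t₁ t₂, |A i' (j k)| :=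
          Finset.abs_sum_le_sum_abs _ _
      _ ≤ ∑ k ∈ Finset.Ico t₁ t₂, a := Finset.sum_le_sum fun k _ => habs i' (j k)
      _ = ((t₂ - t₁ : ℕ) : ℝ) * a := by rw [Finset.sum_const, Nat.card_Ico, nsmul_eq_mul]
      _ = a * ((t₂ : ℝ) - t₁) := by rw [Nat.cast_sub h]; ring
  have hUdiff : ∀ t₁ t₂ j', t₁ ≤ t₂ → |U t₂ j' - U t₁ j'| ≤ a * ((t₂ : ℝ) - t₁) := by
    intro t₁ t₂ j' h
    have heq : U t₂ j' - U t₁ j' = ∑ k ∈ Finset.Ico t₁ t₂, A (i k) j' := by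
      rw [hUsum t₂ j', hUsum t₁ j', ← Finset.sum_range_add_sum_Ico (fun k => A (i k) j') h]
      ring
    rw [heq]
    calc |∑ k ∈ Finset.Ico t₁ t₂, A (i k) j'| ≤ ∑ k ∈ Finset.Ico t₁ t₂, |A (i k) j'| :=
          Finset.abs_sum_le_sum_abs _ _
      _ ≤ ∑ k ∈ Finset.Ico t₁ t₂, a := Finset.sum_le_sum fun k _ => habs (i k) j'
      _ = ((t₂ - t₁ : ℕ) : ℝ) * a := by rw [Finset.sum_const, Nat.card_Ico, nsmul_eq_mul]
      _ = a * ((t₂ : ℝ) - t₁) := by rw [Nat.cast_sub h]; ring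
  set T := s + t with hT
  -- spread of V at time T
  have hVspread : Finset.univ.sup' Finset.univ_nonempty (V T) -
      Finset.univ.inf' Finset.univ_nonempty (V T) ≤ 2 * a * (t + 1) := by
    have : ∀ i' : Fin (m+1),
        Finset.univ.sup' Finset.univ_nonempty (V T) - 2 * a * (t + 1) ≤ V T i' := by
      intro i'
      obtain ⟨t₁, hs1, hst1, helig⟩ := heligrow i'
      have hd : ((T : ℝ) - t₁) ≤ t := by
        have : (T : ℝ) = s + t := by exact_mod_cast rfl
        have ht₁ : (s : ℝ) ≤ t₁ := by exact_mod_cast hs1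
        linarith
      have had : a * ((T : ℝ) - t₁) ≤ a * t := by
        apply mul_le_mul_of_nonneg_left hd ha0
      -- sup V T ≤ sup V t₁ + a*(T - t₁)
      have hsup : Finset.univ.sup' Finset.univ_nonempty (V T) ≤
          Finset.univ.sup' Finset.univ_nonempty (V t₁) + a * ((T : ℝ) - t₁) := by
        apply Finset.sup'_le
        intro i'' _
        have := abs_le.mp (hVdiff t₁ T i'' hst1)
        have h2 : V t₁ i'' ≤ Finset.univ.sup' Finset.univ_nonempty (V t₁) :=
          Finset.le_sup' _ (Finset.mem_univ _)
        linarith [this.2]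
      have hmove := abs_le.mp (hVdiff t₁ T i' hst1)
      linarith [hmove.1, helig]
    have := Finset.le_inf' Finset.univ_nonempty (V T) (fun i' _ => this i')
    linarith
  -- spread of U at time T
  have hUspread : Finset.univ.sup' Finset.univ_nonempty (U T) -
      Finset.univ.inf' Finset.univ_nonempty (U T) ≤ 2 * a * (t + 1) := by
    have : ∀ j' : Fin (n+1),
        U T j' ≤ Finset.univ.inf' Finset.univ_nonempty (U T) + 2 * a * (t + 1) := by
      intro j'
      obtain ⟨t₁, hs1, hst1, helig⟩ := heligcol j'
      have hd : ((T : ℝ) - t₁) ≤ t := by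
        have : (T : ℝ) = s + t := by exact_mod_cast rfl
        have ht₁ : (s : ℝ) ≤ t₁ := by exact_mod_cast hs1
        linarith
      have had : a * ((T : ℝ) - t₁) ≤ a * t := by
        apply mul_le_mul_of_nonneg_left hd ha0
      have hinf : Finset.univ.inf' Finset.univ_nonempty (U t₁) - a * ((T : ℝ) - t₁) ≤
          Finset.univ.inf' Finset.univ_nonempty (U T) := by
        apply Finset.le_inf'
        intro j'' _
        have := abs_le.mp (hUdiff t₁ T j'' hst1)
        have h2 : Finset.univ.inf' Finset.univ_nonempty (U t₁) ≤ U t₁ j'' :=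
          Finset.inf'_le _ (Finset.mem_univ _)
        linarith [this.1]
      have hmove := abs_le.mp (hUdiff t₁ T j' hst1)
      linarith [hmove.2, helig]
    have := Finset.sup'_le Finset.univ_nonempty (U T) (fun j' _ => this j')
    linarith
  -- cross inequality : inf V T ≤ sup U T
  have hcross : Finset.univ.inf' Finset.univ_nonempty (V T) ≤
      Finset.univ.sup' Finset.univ_nonempty (U T) := by
    have hS : Finset.univ.inf' Finset.univ_nonempty
          (fun i' => ∑ k ∈ Finset.range T, A i' (j k)) ≤
        Finset.univ.sup' Finset.univ_nonempty
          (fun j' => ∑ k ∈ Finset.range T, A (i k) j') := by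
      rcases Nat.eq_zero_or_pos T with hz | hpos
      · simp [hz]
      · have h1 : (T : ℝ) * Finset.univ.inf' Finset.univ_nonempty
            (fun i' => ∑ k ∈ Finset.range T, A i' (j k)) ≤
            ∑ σ ∈ Finset.range T, ∑ k ∈ Finset.range T, A (i σ) (j k) := by
          calc (T : ℝ) * _ = ∑ σ ∈ Finset.range T, Finset.univ.inf' Finset.univ_nonempty
                (fun i' => ∑ k ∈ Finset.range T, A i' (j k)) := by
                rw [Finset.sum_const, Finset.card_range, nsmul_eq_mul]
            _ ≤ _ := Finset.sum_le_sum fun σ _ =>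
                Finset.inf'_le _ (Finset.mem_univ (i σ))
        have h2 : ∑ σ ∈ Finset.range T, ∑ k ∈ Finset.range T, A (i σ) (j k) ≤
            (T : ℝ) * Finset.univ.sup' Finset.univ_nonempty
              (fun j' => ∑ k ∈ Finset.range T, A (i k) j') := by
          rw [Finset.sum_comm]
          calc ∑ k ∈ Finset.range T, ∑ σ ∈ Finset.range T, A (i σ) (j k)
              ≤ ∑ k ∈ Finset.range T, Finset.univ.sup' Finset.univ_nonempty
                (fun j' => ∑ σ ∈ Finset.range T, A (i σ) j') :=
                Finset.sum_le_sum fun k _ =>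
                  Finset.le_sup' (fun j' => ∑ σ ∈ Finset.range T, A (i σ) j')
                    (Finset.mem_univ (j k))
            _ = _ := by rw [Finset.sum_const, Finset.card_range, nsmul_eq_mul]
        have hTpos : (0 : ℝ) < T := by exact_mod_cast hpos
        exact le_of_mul_le_mul_left (le_trans h1 h2) hTpos
    obtain ⟨i₀, -, hi₀⟩ := Finset.exists_mem_eq_inf' Finset.univ_nonempty
      (fun i' => ∑ k ∈ Finset.range T, A i' (j k))
    obtain ⟨j₀, -, hj₀⟩ := Finset.exists_mem_eq_sup' Finset.univ_nonempty
      (fun j' => ∑ k ∈ Finset.range T, A (i k) j')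
    have hv0 : V 0 i₀ ≤ Finset.univ.sup' Finset.univ_nonempty (V 0) :=
      Finset.le_sup' _ (Finset.mem_univ _)
    have hu0 : Finset.univ.inf' Finset.univ_nonempty (U 0) ≤ U 0 j₀ :=
      Finset.inf'_le _ (Finset.mem_univ _)
    have hVi : Finset.univ.inf' Finset.univ_nonempty (V T) ≤ V T i₀ :=
      Finset.inf'_le _ (Finset.mem_univ _)
    have hUj : U T j₀ ≤ Finset.univ.sup' Finset.univ_nonempty (U T) :=
      Finset.le_sup' _ (Finset.mem_univ _)
    have hVT : V T i₀ = V 0 i₀ + ∑ k ∈ Finset.range T, A i₀ (j k) := hVsum T i₀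
    have hUT : U T j₀ = U 0 j₀ + ∑ k ∈ Finset.range T, A (i k) j₀ := hUsum T j₀
    rw [hi₀, hj₀] at hS
    linarith
  linarith
end

section
/- In anticipatory fictitious play applied symmetrically to C^n for n = 3 or n = 4, the quantity max_j Δ_{t,j} (where Δ_t = t C^n x̄_t) is bounded above by 2 for all t, for arbitrary tiebreaking; consequently max_j (C^n x̄_t)_j ≤ 2/t, i.e., the exploitability of x̄_t is O(t⁻¹). -/
open Matrix Finset

/-!
Write `Δ_t = t Cⁿ x̄_t`. Since `Δ_{t+1} = Δ_t + Cⁿ e_{i_{t+1}}` and positive scaling does not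
change best responses, `Δ_t` performs a walk on `ℤⁿ` whose steps depend only on the current
position: from `D`, let `a` maximise `D` and `b` maximise `D + Cⁿ e_a`; the next point is
`D + Cⁿ e_b`. It therefore suffices to find a finite set of integer vectors that contains every
column of `Cⁿ`, is closed under these steps, and has all entries `≤ 1`. For `n = 3` the vectors
with entries in `[-2, 1]` summing to `0` do, for `n = 4` the vectors with entries in `[-1, 1]` and
`D_j + D_{j+2} = 0`; closure is a finite check.
-/

def cyclicMatrix (n : ℕ) : Matrix (ZMod n) (ZMod n) ℤ :=
  Matrix.of fun i j => if i = j + 1 then 1 else if i = j - 1 then -1 else 0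

section CumulativePayoff

variable {ι : Type*} (A : Matrix ι ι ℤ)

def IsAFPInvariant (S : Set (ι → ℤ)) : Prop :=
  (∀ a, (fun j => A j a) ∈ S) ∧
    ∀ D ∈ S, ∀ a b, (∀ j, D j ≤ D a) → (∀ j, D j + A j a ≤ D b + A b a) →
      (D + fun j => A j b) ∈ S

/-- `Δ_t = t Cⁿ x̄_t`, as an integer vector. -/
def cumulativePayoff (i : ℕ → ι) (t : ℕ) : ι → ℤ :=
  ∑ k ∈ Icc 1 t, fun j => A j (i k)

theorem cumulativePayoff_succ (i : ℕ → ι) (t : ℕ) :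
    cumulativePayoff A i (t + 1) = cumulativePayoff A i t + fun j => A j (i (t + 1)) :=
  sum_Icc_succ_top (by omega) _

theorem cumulativePayoff_mem {S : Set (ι → ℤ)} (hS : IsAFPInvariant A S)
    (i i' : ℕ → ι)
    (hBR' : ∀ t, 1 ≤ t → ∀ j, cumulativePayoff A i t j ≤ cumulativePayoff A i t (i' (t + 1)))
    (hBR : ∀ t, 1 ≤ t → ∀ j, cumulativePayoff A i t j + A j (i' (t + 1)) ≤
      cumulativePayoff A i t (i (t + 1)) + A (i (t + 1)) (i' (t + 1))) :
    ∀ t, 1 ≤ t → cumulativePayoff A i t ∈ S := by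
  intro t ht
  induction t, ht using Nat.le_induction with
  | base => simpa [cumulativePayoff] using hS.1 (i 1)
  | succ t ht ih =>
    rw [cumulativePayoff_succ]
    exact hS.2 _ ih _ _ (hBR' t ht) (hBR t ht)

end CumulativePayoff

section RealPayoff

variable {ι : Type*} [Fintype ι]

theorem mul_mulVec_inv_smul (M : Matrix ι ι ℝ) {c : ℝ} (hc : c ≠ 0) (v : ι → ℝ) (j : ι) :
    c * (M *ᵥ (c⁻¹ • v)) j = (M *ᵥ v) j := by
  rw [mulVec_smul, Pi.smul_apply, smul_eq_mul, mul_inv_cancel_left₀ hc]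

variable [DecidableEq ι] (A : Matrix ι ι ℤ)

theorem intCast_mulVec_sum_single (i : ℕ → ι) (t : ℕ) (j : ι) :
    (A.map (↑) *ᵥ ∑ k ∈ Icc 1 t, (Pi.single (i k) 1 : ι → ℝ)) j = cumulativePayoff A i t j := by
  simp [mulVec_sum, cumulativePayoff]

theorem intCast_mulVec_smul_add_single (x : ι → ℝ) (c : ℝ) (a j : ι) :
    (A.map (↑) *ᵥ (c • x + Pi.single a 1)) j = c * (A.map (↑) *ᵥ x) j + A j a := by
  simp [mulVec_add, mulVec_smul]

theorem afp_payoff_le_of_invariant {S : Set (ι → ℤ)} (hS : IsAFPInvariant A S)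
    {M : ℤ} (hM : ∀ D ∈ S, ∀ j, D j ≤ M) (C : Matrix ι ι ℝ) (hCA : C = A.map (↑))
    (i i' : ℕ → ι) (xbar xbar' : ℕ → ι → ℝ)
    (hxbar : ∀ t, xbar t = ((t : ℝ))⁻¹ • ∑ k ∈ Icc 1 t, (Pi.single (i k) 1 : ι → ℝ))
    (hxbar' : ∀ t, xbar' (t + 1) =
      ((t : ℝ) + 1)⁻¹ • ((t : ℝ) • xbar t + (Pi.single (i' (t + 1)) 1 : ι → ℝ)))
    (hBR' : ∀ t, 1 ≤ t → ∀ j, (C *ᵥ xbar t) j ≤ (C *ᵥ xbar t) (i' (t + 1)))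
    (hBR : ∀ t, 1 ≤ t → ∀ j, (C *ᵥ xbar' (t + 1)) j ≤ (C *ᵥ xbar' (t + 1)) (i (t + 1))) :
    ∀ t : ℕ, 1 ≤ t → ∀ j, (t : ℝ) * (C *ᵥ xbar t) j ≤ M := by
  subst hCA
  have hΔ : ∀ t : ℕ, 1 ≤ t → ∀ j, (t : ℝ) * (A.map (↑) *ᵥ xbar t) j = cumulativePayoff A i t j := by
    intro t ht j
    rw [hxbar, mul_mulVec_inv_smul _ (Nat.cast_ne_zero.2 (by omega)), intCast_mulVec_sum_single]
  have hΔ' : ∀ t : ℕ, 1 ≤ t → ∀ j, ((t : ℝ) + 1) * (A.map (↑) *ᵥ xbar' (t + 1)) j =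
      cumulativePayoff A i t j + A j (i' (t + 1)) := by
    intro t ht j
    rw [hxbar', mul_mulVec_inv_smul _ (by positivity), intCast_mulVec_smul_add_single, hΔ t ht]
  have hmem := cumulativePayoff_mem A hS i i' (fun t ht j => ?_) (fun t ht j => ?_)
  · intro t ht j
    rw [hΔ t ht]
    exact_mod_cast hM _ (hmem t ht) j
  · have h := mul_le_mul_of_nonneg_left (hBR' t ht j) (Nat.cast_nonneg t : (0 : ℝ) ≤ t)
    rwa [hΔ t ht, hΔ t ht, Int.cast_le] at h
  · have h := mul_le_mul_of_nonneg_left (hBR t ht j) (by positivity : (0 : ℝ) ≤ t + 1)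
    rw [hΔ' t ht, hΔ' t ht] at h
    exact_mod_cast h

end RealPayoff

theorem cyclicMatrix_map_intCast (n : ℕ) :
    (cyclicMatrix n).map (↑) =
      Matrix.of fun i j : ZMod n => if i = j + 1 then (1 : ℝ) else if i = j - 1 then -1 else 0 := by
  ext i j
  simp only [cyclicMatrix, map_apply, of_apply]
  split_ifs <;> norm_num

noncomputable def cyclicInvariant3 : Finset (ZMod 3 → ℤ) :=
  (Fintype.piFinset fun _ => Icc (-2 : ℤ) 1).filter fun D => ∑ j, D j = 0

noncomputable def cyclicInvariant4 : Finset (ZMod 4 → ℤ) :=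
  (Fintype.piFinset fun _ => Icc (-1 : ℤ) 1).filter fun D => ∀ j, D j + D (j + 2) = 0

theorem isAFPInvariant_cyclicInvariant3 : IsAFPInvariant (cyclicMatrix 3) cyclicInvariant3 := by
  simp only [IsAFPInvariant, mem_coe]
  decide

theorem isAFPInvariant_cyclicInvariant4 : IsAFPInvariant (cyclicMatrix 4) cyclicInvariant4 := by
  simp only [IsAFPInvariant, mem_coe]
  decide

theorem le_one_of_mem_cyclicInvariant3 : ∀ D ∈ cyclicInvariant3, ∀ j, D j ≤ 1 := by
  intro D hD j
  simp only [cyclicInvariant3, mem_filter, Fintype.mem_piFinset, mem_Icc] at hD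
  exact (hD.1 j).2

theorem le_one_of_mem_cyclicInvariant4 : ∀ D ∈ cyclicInvariant4, ∀ j, D j ≤ 1 := by
  intro D hD j
  simp only [cyclicInvariant4, mem_filter, Fintype.mem_piFinset, mem_Icc] at hD
  exact (hD.1 j).2

/-- In anticipatory fictitious play applied symmetrically to `Cⁿ` for `n = 3` or
`n = 4`, `max_j Δ_{t,j} ≤ 2` for all `t ≥ 1` and arbitrary tiebreaking, where
`Δ_t = t Cⁿ x̄_t`; consequently `max_j (Cⁿ x̄_t)_j ≤ 2/t`, i.e. the exploitability of
`x̄_t` is `O(t⁻¹)`. -/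
theorem afp_cyclic_bounded (n : ℕ) [NeZero n] (hn : n = 3 ∨ n = 4)
    (C : Matrix (ZMod n) (ZMod n) ℝ)
    (hC : ∀ i j : ZMod n, C i j = if i = j + 1 then 1 else if i = j - 1 then -1 else 0)
    (i i' : ℕ → ZMod n) (xbar xbar' : ℕ → ZMod n → ℝ)
    (hxbar : ∀ t, xbar t = ((t : ℝ))⁻¹ • ∑ k ∈ Finset.Icc 1 t, (Pi.single (i k) 1 : ZMod n → ℝ))
    (hxbar' : ∀ t, xbar' (t+1) =
      (((t : ℝ) + 1))⁻¹ • ((t : ℝ) • xbar t + (Pi.single (i' (t+1)) 1 : ZMod n → ℝ)))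
    (hBR' : ∀ t, 1 ≤ t → ∀ j, C.mulVec (xbar t) j ≤ C.mulVec (xbar t) (i' (t+1)))
    (hBR : ∀ t, 1 ≤ t → ∀ j, C.mulVec (xbar' (t+1)) j ≤ C.mulVec (xbar' (t+1)) (i (t+1))) :
    ∀ t : ℕ, 1 ≤ t → ∀ j,
      (t : ℝ) * C.mulVec (xbar t) j ≤ 2 ∧ C.mulVec (xbar t) j ≤ 2 / (t : ℝ) := by
  have hCA : C = (cyclicMatrix n).map (↑) := by
    rw [cyclicMatrix_map_intCast]
    exact Matrix.ext hC
  have hle_one : ∀ t : ℕ, 1 ≤ t → ∀ j, (t : ℝ) * (C *ᵥ xbar t) j ≤ (1 : ℤ) := by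
    rcases hn with rfl | rfl
    · exact afp_payoff_le_of_invariant _ isAFPInvariant_cyclicInvariant3
        le_one_of_mem_cyclicInvariant3 C hCA i i' xbar xbar' hxbar hxbar' hBR' hBR
    · exact afp_payoff_le_of_invariant _ isAFPInvariant_cyclicInvariant4
        le_one_of_mem_cyclicInvariant4 C hCA i i' xbar xbar' hxbar hxbar' hBR' hBR
  intro t ht j
  have hle : (t : ℝ) * (C *ᵥ xbar t) j ≤ 2 := (hle_one t ht j).trans (by norm_num)
  refine ⟨hle, ?_⟩
  rw [le_div_iff₀ (by exact_mod_cast ht), mul_comm]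
  exact hle
end

section
/- In a symmetric fictitious play process on the transitive game T^n starting at x₁ = e₁, the indices played are nondecreasing and increase by at most 1 per step, and the waiting times between successive new indices are strictly increasing: letting τ_k = min{t : x_t = e_k}, one has τ_{k+1} − τ_k > τ_k − τ_{k−1} for all applicable k < n. -/
open Matrix Finset

/-!
Write `g t j = ∑_{s ≤ t} T j (i s)` for the cumulative payoff, so that best responding to `x̄_t`
means maximizing `g t`. While the current index is `m`, the payoff vector `g t` vanishes beyond
`m + 1`, is maximal at `m` among the indices `≤ m`, and is positive at `m + 1`; playing `m` again
raises `g t (m + 1)` and lowers `g t (m - 1)`, and switching to `m + 1` lowers `g t m`, so this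
shape is invariant and each step stays at `m` or moves to `m + 1`. Since `g t (m + 1)` keeps
growing while `g t m` is frozen, every index is eventually reached. Just before `τ_{k+1}`, the
entry `g k` has collected `τ_k − τ_{k−1}` times `T_{k,k−1}` and `g (k + 1)` has collected
`τ_{k+1} − τ_k` times `T_{k+1,k}`; the best response compares them, and `T_{k+1,k} < T_{k,k−1}`
gives the strict increase of the waiting times.
-/

namespace FictitiousPlay

section UnitStep

def UnitStep (f : ℕ → ℕ) : Prop :=
  ∀ t, 1 ≤ t → f (t + 1) = f t ∨ f (t + 1) = f t + 1

noncomputable def firstTime (f : ℕ → ℕ) (k : ℕ) : ℕ :=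
  sInf {t | 1 ≤ t ∧ f t = k}

variable {f : ℕ → ℕ}

theorem UnitStep.monotoneOn (hf : UnitStep f) : MonotoneOn f {t | 1 ≤ t} :=
  monotoneOn_nat_Ici_of_le_succ fun t ht => by rcases hf t ht with h | h <;> omega

theorem UnitStep.exists_eq (hf : UnitStep f) {s t v : ℕ} (hs : 1 ≤ s) (hst : s ≤ t)
    (hsv : f s ≤ v) (hvt : v ≤ f t) : ∃ u, s ≤ u ∧ u ≤ t ∧ f u = v := by
  induction t, hst using Nat.le_induction with
  | base => exact ⟨s, le_rfl, le_rfl, by omega⟩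
  | succ t hst ih =>
    by_cases hv : v ≤ f t
    · obtain ⟨u, hsu, hut, hu⟩ := ih hv
      exact ⟨u, hsu, by omega, hu⟩
    · exact ⟨t + 1, by omega, le_rfl, by rcases hf t (by omega) with h | h <;> omega⟩

theorem firstTime_spec {k : ℕ} (hk : ∃ t, 1 ≤ t ∧ f t = k) :
    1 ≤ firstTime f k ∧ f (firstTime f k) = k :=
  Nat.sInf_mem hk

theorem firstTime_le {k t : ℕ} (ht : 1 ≤ t) (hk : f t = k) : firstTime f k ≤ t :=
  Nat.sInf_le ⟨ht, hk⟩

theorem firstTime_zero (h1 : f 1 = 0) : firstTime f 0 = 1 :=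
  le_antisymm (firstTime_le le_rfl h1) (firstTime_spec ⟨1, le_rfl, h1⟩).1

theorem UnitStep.apply_pred_firstTime_succ (hf : UnitStep f) (h1 : f 1 = 0) {k : ℕ}
    (hex : ∃ t, 1 ≤ t ∧ f t = k + 1) :
    2 ≤ firstTime f (k + 1) ∧ f (firstTime f (k + 1) - 1) = k := by
  obtain ⟨hτ1, hτk⟩ := firstTime_spec hex
  have hτ2 : 2 ≤ firstTime f (k + 1) := by
    by_contra h
    have h1' : firstTime f (k + 1) = 1 := by omega
    rw [h1', h1] at hτk
    omega
  have hle : f (firstTime f (k + 1) - 1) ≤ k + 1 := by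
    have := hf.monotoneOn (show 1 ≤ firstTime f (k + 1) - 1 by omega) hτ1 (by omega)
    omega
  have hne : f (firstTime f (k + 1) - 1) ≠ k + 1 := fun h => by
    have := firstTime_le (show 1 ≤ firstTime f (k + 1) - 1 by omega) h
    omega
  have hstep := hf (firstTime f (k + 1) - 1) (by omega)
  rw [Nat.sub_add_cancel hτ1] at hstep
  exact ⟨hτ2, by omega⟩

theorem UnitStep.firstTime_lt_firstTime_succ (hf : UnitStep f) (h1 : f 1 = 0) {k : ℕ}
    (hex : ∃ t, 1 ≤ t ∧ f t = k + 1) : firstTime f k < firstTime f (k + 1) := by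
  obtain ⟨hτ2, hpred⟩ := hf.apply_pred_firstTime_succ h1 hex
  have := firstTime_le (show 1 ≤ firstTime f (k + 1) - 1 by omega) hpred
  omega

theorem UnitStep.apply_eq_of_firstTime_le (hf : UnitStep f) {k s : ℕ}
    (hex : ∃ t, 1 ≤ t ∧ f t = k) (hks : firstTime f k ≤ s) (hsk : s < firstTime f (k + 1)) :
    f s = k := by
  obtain ⟨hτ1, hτk⟩ := firstTime_spec hex
  have hle : k ≤ f s := hτk ▸ hf.monotoneOn hτ1 (show 1 ≤ s by omega) hks
  by_contra hne
  obtain ⟨u, hku, hus, hu⟩ := hf.exists_eq hτ1 hks (by omega) (show k + 1 ≤ f s by omega)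
  have := firstTime_le (show 1 ≤ u by omega) hu
  omega

end UnitStep

variable {n : ℕ}

def cumPayoff (T : Matrix (Fin n) (Fin n) ℝ) (i : ℕ → Fin n) (t : ℕ) (j : Fin n) : ℝ :=
  ∑ s ∈ Icc 1 t, T j (i s)

structure IsTransitive (T : Matrix (Fin n) (Fin n) ℝ) : Prop where
  sub_pos : ∀ a b : Fin n, (a : ℕ) = b + 1 → 0 < T a b
  super_neg : ∀ a b : Fin n, (a : ℕ) + 1 = b → T a b < 0
  eq_zero : ∀ a b : Fin n, (a : ℕ) ≠ b + 1 → (a : ℕ) + 1 ≠ b → T a b = 0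

structure IsFictitiousPlay (T : Matrix (Fin n) (Fin n) ℝ) (i : ℕ → Fin n) : Prop where
  start : (i 1 : ℕ) = 0
  le_bestResponse : ∀ t, 1 ≤ t → ∀ j, cumPayoff T i t j ≤ cumPayoff T i t (i (t + 1))

structure CumPayoffInvariant (T : Matrix (Fin n) (Fin n) ℝ) (i : ℕ → Fin n) (t : ℕ) :
    Prop where
  eq_zero : ∀ j : Fin n, (i t : ℕ) + 1 < j → cumPayoff T i t j = 0
  lt_self : ∀ j : Fin n, (j : ℕ) < i t → cumPayoff T i t j < cumPayoff T i t (i t)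
  pos_succ : ∀ j : Fin n, (j : ℕ) = i t + 1 → 0 < cumPayoff T i t j

variable {T : Matrix (Fin n) (Fin n) ℝ} {i : ℕ → Fin n}

local notation "τ[" i "]" => firstTime fun t => ((i t : Fin _) : ℕ)

theorem IsTransitive.diag (hT : IsTransitive T) (a : Fin n) : T a a = 0 :=
  hT.eq_zero a a (by omega) (by omega)

theorem IsTransitive.eq_zero_of_succ_lt (hT : IsTransitive T) {a b : Fin n}
    (h : (b : ℕ) + 1 < a) : T a b = 0 :=
  hT.eq_zero a b (by omega) (by omega)

theorem IsTransitive.nonpos_of_lt (hT : IsTransitive T) {a b : Fin n} (h : (a : ℕ) < b) :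
    T a b ≤ 0 := by
  by_cases hab : (a : ℕ) + 1 = b
  · exact (hT.super_neg a b hab).le
  · exact (hT.eq_zero a b (by omega) hab).le

@[simp]
theorem cumPayoff_zero (j : Fin n) : cumPayoff T i 0 j = 0 := by
  simp [cumPayoff]

theorem cumPayoff_succ (t : ℕ) (j : Fin n) :
    cumPayoff T i (t + 1) j = cumPayoff T i t j + T j (i (t + 1)) :=
  Finset.sum_Icc_succ_top (by omega) _

theorem cumPayoff_one (j : Fin n) : cumPayoff T i 1 j = T j (i 1) := by
  simpa using cumPayoff_succ (T := T) (i := i) 0 j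

theorem cumPayoff_eq_add_mul {a b : ℕ} (hab : a ≤ b) {v : Fin n}
    (hv : ∀ s, a < s → s ≤ b → i s = v) (j : Fin n) :
    cumPayoff T i b j = cumPayoff T i a j + ((b : ℝ) - a) * T j v := by
  induction b, hab using Nat.le_induction with
  | base => simp
  | succ b hab ih =>
    rw [cumPayoff_succ, ih fun s h1 h2 => hv s h1 (by omega), hv (b + 1) (by omega) le_rfl]
    push_cast
    ring

theorem mulVec_average_eq_smul_cumPayoff {xbar : ℕ → Fin n → ℝ}
    (hxbar : ∀ t, xbar t = ((t : ℝ))⁻¹ • ∑ k ∈ Icc 1 t, (Pi.single (i k) 1 : Fin n → ℝ))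
    (t : ℕ) : T *ᵥ xbar t = ((t : ℝ))⁻¹ • cumPayoff T i t := by
  ext j
  simp [hxbar, mulVec_smul, mulVec_sum, cumPayoff]

theorem isFictitiousPlay_of_mulVec_average_le (hi1 : (i 1 : ℕ) = 0)
    {xbar : ℕ → Fin n → ℝ}
    (hxbar : ∀ t, xbar t = ((t : ℝ))⁻¹ • ∑ k ∈ Icc 1 t, (Pi.single (i k) 1 : Fin n → ℝ))
    (hBR : ∀ t, 1 ≤ t → ∀ j, T.mulVec (xbar t) j ≤ T.mulVec (xbar t) (i (t + 1))) :
    IsFictitiousPlay T i where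
  start := hi1
  le_bestResponse t ht j := by
    have h := hBR t ht j
    simp only [mulVec_average_eq_smul_cumPayoff hxbar, Pi.smul_apply, smul_eq_mul] at h
    exact le_of_mul_le_mul_left h (by positivity)

theorem cumPayoffInvariant_one (hT : IsTransitive T) (hi1 : (i 1 : ℕ) = 0) :
    CumPayoffInvariant T i 1 where
  eq_zero j hj := by rw [cumPayoff_one]; exact hT.eq_zero_of_succ_lt (by omega)
  lt_self j hj := by omega
  pos_succ j hj := by rw [cumPayoff_one]; exact hT.sub_pos _ _ (by omega)

namespace CumPayoffInvariant

variable {t : ℕ}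

theorem succ_of_eq (h : CumPayoffInvariant T i t) (hT : IsTransitive T)
    (hstay : i (t + 1) = i t) : CumPayoffInvariant T i (t + 1) where
  eq_zero j hj := by
    rw [hstay] at hj
    rw [cumPayoff_succ, hstay, h.eq_zero j hj, hT.eq_zero_of_succ_lt (by omega), add_zero]
  lt_self j hj := by
    rw [hstay] at hj ⊢
    rw [cumPayoff_succ, cumPayoff_succ, hstay, hT.diag, add_zero]
    linarith [h.lt_self j hj, hT.nonpos_of_lt hj]
  pos_succ j hj := by
    rw [hstay] at hj
    rw [cumPayoff_succ, hstay]
    linarith [h.pos_succ j hj, hT.sub_pos j (i t) hj]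

theorem succ_of_val_eq_succ (h : CumPayoffInvariant T i t) (hT : IsTransitive T)
    (hbr : cumPayoff T i t (i t) ≤ cumPayoff T i t (i (t + 1)))
    (hmove : (i (t + 1) : ℕ) = i t + 1) : CumPayoffInvariant T i (t + 1) where
  eq_zero j hj := by
    rw [cumPayoff_succ, h.eq_zero j (by omega), hT.eq_zero_of_succ_lt hj, add_zero]
  lt_self j hj := by
    rw [cumPayoff_succ, cumPayoff_succ, hT.diag, add_zero]
    rcases Nat.lt_or_ge (j : ℕ) (i t) with hjt | hjt
    · linarith [h.lt_self j hjt, hT.eq_zero j (i (t + 1)) (by omega) (by omega)]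
    · obtain rfl : j = i t := Fin.ext (by omega)
      linarith [hT.super_neg (i t) (i (t + 1)) hmove.symm]
  pos_succ j hj := by
    rw [cumPayoff_succ, h.eq_zero j (by omega), zero_add]
    exact hT.sub_pos j _ hj

end CumPayoffInvariant

namespace IsFictitiousPlay

theorem val_succ_of_invariant (hfp : IsFictitiousPlay T i) {t : ℕ} (ht : 1 ≤ t)
    (h : CumPayoffInvariant T i t) : (i (t + 1) : ℕ) = i t ∨ (i (t + 1) : ℕ) = i t + 1 := by
  rcases Nat.lt_or_ge (i (t + 1) : ℕ) (i t) with hlt | hge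
  · exact absurd (hfp.le_bestResponse t ht (i t)) (h.lt_self _ hlt).not_ge
  by_contra hcon
  have hjump : (i t : ℕ) + 1 < i (t + 1) := by omega
  have hbr := hfp.le_bestResponse t ht ⟨i t + 1, hjump.trans (i (t + 1)).isLt⟩
  rw [h.eq_zero _ hjump] at hbr
  exact (h.pos_succ _ rfl).not_ge hbr

theorem cumPayoffInvariant (hfp : IsFictitiousPlay T i) (hT : IsTransitive T) {t : ℕ}
    (ht : 1 ≤ t) : CumPayoffInvariant T i t := by
  induction t, ht using Nat.le_induction with
  | base => exact cumPayoffInvariant_one hT hfp.start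
  | succ t ht ih =>
    rcases hfp.val_succ_of_invariant ht ih with hstay | hmove
    · exact ih.succ_of_eq hT (Fin.ext hstay)
    · exact ih.succ_of_val_eq_succ hT (hfp.le_bestResponse t ht (i t)) hmove

theorem unitStep (hfp : IsFictitiousPlay T i) (hT : IsTransitive T) :
    UnitStep fun t => (i t : ℕ) :=
  fun _ ht => hfp.val_succ_of_invariant ht (hfp.cumPayoffInvariant hT ht)

theorem exists_val_lt (hfp : IsFictitiousPlay T i) (hT : IsTransitive T)
    {t : ℕ} (ht : 1 ≤ t) (htop : (i t : ℕ) + 1 < n) :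
    ∃ s, t ≤ s ∧ (i t : ℕ) < i s := by
  by_contra! hstall
  have hconst : ∀ s, t ≤ s → i s = i t := fun s hs =>
    Fin.ext (le_antisymm (hstall s hs)
      ((hfp.unitStep hT).monotoneOn ht (show 1 ≤ s by omega) hs))
  set m' : Fin n := ⟨i t + 1, htop⟩
  have hsub := hT.sub_pos m' (i t) rfl
  obtain ⟨r, hr⟩ := exists_nat_gt ((cumPayoff T i t (i t) - cumPayoff T i t m') / T m' (i t))
  rw [div_lt_iff₀ hsub] at hr
  have hbr := hfp.le_bestResponse (t + r) (by omega) m'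
  have hblock : ∀ s, t < s → s ≤ t + r → i s = i t := fun s hs _ => hconst s hs.le
  rw [hconst (t + r + 1) (by omega), cumPayoff_eq_add_mul (Nat.le_add_right t r) hblock,
    cumPayoff_eq_add_mul (Nat.le_add_right t r) hblock, hT.diag] at hbr
  push_cast at hbr
  linarith

theorem exists_val_eq (hfp : IsFictitiousPlay T i) (hT : IsTransitive T)
    {k : ℕ} (hk : k < n) : ∃ t, 1 ≤ t ∧ (i t : ℕ) = k := by
  induction k with
  | zero => exact ⟨1, le_rfl, hfp.start⟩
  | succ k ih =>
    obtain ⟨t, ht, rfl⟩ := ih (by omega)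
    obtain ⟨s, hts, hlt⟩ := hfp.exists_val_lt hT ht hk
    obtain ⟨u, htu, -, hu⟩ :=
      (hfp.unitStep hT).exists_eq ht hts (v := i t + 1) (by omega) (by omega)
    exact ⟨u, ht.trans htu, hu⟩

theorem cumPayoff_pred_firstTime_eq_zero (hfp : IsFictitiousPlay T i) (hT : IsTransitive T)
    {k : ℕ} (hk : k < n) {j : Fin n} (hj : k < j) :
    cumPayoff T i (τ[i] k - 1) j = 0 := by
  cases k with
  | zero => simp [firstTime_zero (f := fun t => (i t : ℕ)) hfp.start]
  | succ k =>
    obtain ⟨hτ2, hpred⟩ :=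
      (hfp.unitStep hT).apply_pred_firstTime_succ hfp.start (hfp.exists_val_eq hT hk)
    exact (hfp.cumPayoffInvariant hT (by omega)).eq_zero j (by omega)

theorem cumPayoff_pred_firstTime_succ (hfp : IsFictitiousPlay T i) (hT : IsTransitive T)
    {k : ℕ} (hk : k + 1 < n) (j : Fin n) :
    cumPayoff T i (τ[i] (k + 1) - 1) j =
      cumPayoff T i (τ[i] k - 1) j + ((τ[i] (k + 1) : ℝ) - τ[i] k) * T j ⟨k, by omega⟩ := by
  have hf := hfp.unitStep hT
  have hexk := hfp.exists_val_eq hT (k := k) (by omega)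
  have hexk1 := hfp.exists_val_eq hT hk
  have hτ1 := (firstTime_spec hexk).1
  have hτ2 := (hf.apply_pred_firstTime_succ hfp.start hexk1).1
  have hlt := hf.firstTime_lt_firstTime_succ hfp.start hexk1
  have hblock : ∀ s, τ[i] k - 1 < s → s ≤ τ[i] (k + 1) - 1 → i s = ⟨k, by omega⟩ :=
    fun s h1 h2 => Fin.ext (hf.apply_eq_of_firstTime_le (k := k) hexk (by omega) (by omega))
  rw [cumPayoff_eq_add_mul (by omega) hblock, Nat.cast_sub (by omega), Nat.cast_sub hτ1]
  ring_nf

theorem firstTime_sub_lt_firstTime_sub (hfp : IsFictitiousPlay T i) (hT : IsTransitive T)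
    (hdec : ∀ a b c : Fin n, (a : ℕ) = b + 1 → (b : ℕ) = c + 1 → T a b < T b c)
    {k : ℕ} (hk : k + 2 < n) :
    (τ[i] (k + 1) : ℤ) - τ[i] k < (τ[i] (k + 2) : ℤ) - τ[i] (k + 1) := by
  set A : Fin n := ⟨k, by omega⟩
  set B : Fin n := ⟨k + 1, by omega⟩
  set C : Fin n := ⟨k + 2, hk⟩
  have hexC : ∃ t, 1 ≤ t ∧ (i t : ℕ) = k + 1 + 1 := hfp.exists_val_eq hT hk
  obtain ⟨hτ1, hτC⟩ := firstTime_spec hexC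
  have hτ2 := ((hfp.unitStep hT).apply_pred_firstTime_succ hfp.start hexC).1
  have hC := cumPayoff_pred_firstTime_succ hfp hT hk C
  rw [cumPayoff_pred_firstTime_eq_zero hfp hT (k := k + 1) (by omega) (j := C)
    (by simp [C]), zero_add] at hC
  have hB := cumPayoff_pred_firstTime_succ hfp hT hk B
  rw [hT.diag, mul_zero, add_zero, cumPayoff_pred_firstTime_succ hfp hT (k := k) (by omega),
    cumPayoff_pred_firstTime_eq_zero hfp hT (k := k) (by omega) (j := B) (by simp [B]),
    zero_add] at hB
  -- the best response that first plays `k + 2` compares these two entries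
  have hbr := hfp.le_bestResponse (τ[i] (k + 1 + 1) - 1) (by omega) B
  rw [Nat.sub_add_cancel hτ1, show i (firstTime _ (k + 1 + 1)) = C from Fin.ext hτC, hC,
    hB] at hbr
  have hgap : (0 : ℝ) < τ[i] (k + 1 + 1) - τ[i] (k + 1) :=
    sub_pos.2 (mod_cast (hfp.unitStep hT).firstTime_lt_firstTime_succ hfp.start hexC)
  have hdecr := hdec C B A rfl rfl
  have key := lt_of_mul_lt_mul_right (hbr.trans_lt (mul_lt_mul_of_pos_left hdecr hgap))
    ((hT.sub_pos C B rfl).trans hdecr).le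
  exact_mod_cast key

end IsFictitiousPlay

noncomputable def transitiveGame (n : ℕ) : Matrix (Fin n) (Fin n) ℝ :=
  Matrix.of fun a b =>
    if (a : ℕ) = (b : ℕ) + 1 then ((n : ℝ) - (a : ℕ) + 1) / n
    else if (a : ℕ) + 1 = (b : ℕ) then -(((n : ℝ) - (a : ℕ) + 1) / n) else 0

theorem transitiveGame_weight_pos {n : ℕ} (a : Fin n) : 0 < ((n : ℝ) - (a : ℕ) + 1) / n := by
  have ha : (a : ℝ) < n := mod_cast a.isLt
  have hn : (0 : ℝ) < n := by linarith [a.val.cast_nonneg (α := ℝ)]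
  positivity

theorem isTransitive_transitiveGame (n : ℕ) : IsTransitive (transitiveGame n) where
  sub_pos a b h := by
    rw [transitiveGame, of_apply, if_pos h]
    exact transitiveGame_weight_pos a
  super_neg a b h := by
    rw [transitiveGame, of_apply, if_neg (by omega), if_pos h]
    exact neg_neg_of_pos (transitiveGame_weight_pos a)
  eq_zero a b h₁ h₂ := by rw [transitiveGame, of_apply, if_neg h₁, if_neg h₂]

theorem transitiveGame_sub_lt_sub (n : ℕ) (a b c : Fin n) (hab : (a : ℕ) = b + 1)
    (hbc : (b : ℕ) = c + 1) : transitiveGame n a b < transitiveGame n b c := by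
  rw [transitiveGame, of_apply, of_apply, if_pos hab, if_pos hbc, hab]
  have hn : (0 : ℝ) < n := mod_cast a.pos
  gcongr
  linarith

end FictitiousPlay

open FictitiousPlay in
/-- In a symmetric fictitious play process on the transitive game `Tⁿ` starting at
`x₁ = e₁`: the indices played are nondecreasing, increasing by at most `1` per step;
each strategy index is eventually played; and the waiting times `τ_k = min{t : x_t = e_k}`
between successive new indices are strictly increasing:
`τ_{k+1} − τ_k > τ_k − τ_{k−1}` for all applicable `k < n`. (Indices here are `0`-based,
so the `1`-based entry `(n − i + 2)/n` of `Tⁿ` becomes `(n − i + 1)/n`, and the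
applicable `1`-based range `2 ≤ k ≤ n−1` becomes `1 ≤ k` with `k + 1 ≤ n − 1`.) -/
theorem fp_transitive_waiting_times (n : ℕ) (hn : 3 ≤ n)
    (T : Matrix (Fin n) (Fin n) ℝ)
    (hT : ∀ i j : Fin n, T i j =
      if (i : ℕ) = (j : ℕ) + 1 then ((n : ℝ) - (i : ℕ) + 1) / n
      else if (i : ℕ) + 1 = (j : ℕ) then -(((n : ℝ) - (i : ℕ) + 1) / n) else 0)
    (i : ℕ → Fin n) (hi1 : i 1 = ⟨0, by omega⟩)
    (xbar : ℕ → Fin n → ℝ)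
    (hxbar : ∀ t, xbar t = ((t : ℝ))⁻¹ • ∑ k ∈ Finset.Icc 1 t, (Pi.single (i k) 1 : Fin n → ℝ))
    (hBR : ∀ t, 1 ≤ t → ∀ j, T.mulVec (xbar t) j ≤ T.mulVec (xbar t) (i (t+1)))
    (τ : ℕ → ℕ) (hτ : ∀ k, τ k = sInf {t | 1 ≤ t ∧ (i t : ℕ) = k}) :
    (∀ t : ℕ, 1 ≤ t → i (t+1) = i t ∨ ((i (t+1) : ℕ) = (i t : ℕ) + 1)) ∧
    (∀ k : ℕ, k ≤ n - 1 → ∃ t, 1 ≤ t ∧ (i t : ℕ) = k) ∧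
    (∀ k : ℕ, 1 ≤ k → k + 1 ≤ n - 1 →
      (τ k : ℤ) - (τ (k-1) : ℤ) < (τ (k+1) : ℤ) - (τ k : ℤ)) := by
  obtain rfl : T = transitiveGame n := Matrix.ext hT
  obtain rfl : τ = firstTime fun t => (i t : ℕ) := funext hτ
  have hfp := isFictitiousPlay_of_mulVec_average_le (by rw [hi1]) hxbar hBR
  have hTr := isTransitive_transitiveGame n
  refine ⟨fun t ht => ?_, fun k hk => hfp.exists_val_eq hTr (by omega), fun k hk₁ hk₂ => ?_⟩
  · exact (hfp.unitStep hTr t ht).imp_left Fin.ext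
  · obtain ⟨k, rfl⟩ : ∃ m, k = m + 1 := ⟨k - 1, by omega⟩
    simpa using hfp.firstTime_sub_lt_firstTime_sub hTr (transitiveGame_sub_lt_sub n)
      (k := k) (by omega)
end
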